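/- arXiv:2309.03864 — 7 statements merged into one kernel-verified Lean document; each statement's English description precedes it below -/
import Mathlib

section
/- Let n ≥ 1 and let (f_0, …, f_n) be a family of continuous real-valued functions on the unit circle S¹ = {(x,y) ∈ ℝ² : x² + y² = 1} that is a T-system of order n on S¹. Then n is even. -/
/-!
Evaluate the system at the `n + 1` equally spaced points `θ + 2πj/(n+1)` of the circle. The
determinant `D θ` of the resulting matrix never vanishes, since a kernel vector of its transpose
would give a nontrivial combination with `n + 1` zeros, and it depends continuously on `θ`.
Turning by one step `2π/(n+1)` permutes the points by an `(n+1)`-cycle, so it multiplies `D` by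
`(-1)^n`. For odd `n` the determinant changes sign, and the intermediate value theorem produces
a zero.
-/

/-- A family `f 0, …, f (k-1)` of real-valued functions on `X` is a T-system of
order `n` on the set `S ⊆ X` if every nontrivial linear combination has at most
`n` zeros in `S`. -/
def IsTSystemOn {X : Type*} {k : ℕ} (n : ℕ) (f : Fin k → X → ℝ) (S : Set X) : Prop :=
  ∀ a : Fin k → ℝ, a ≠ 0 → {x ∈ S | ∑ i, a i * f i x = 0}.encard ≤ (n : ℕ∞)

/-- The unit circle in `ℝ²`. -/
def unitCircle : Set (ℝ × ℝ) := {p : ℝ × ℝ | p.1 ^ 2 + p.2 ^ 2 = 1}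

open Real Matrix

def collocationMatrix {X : Type*} {k : ℕ} (f : Fin k → X → ℝ) (p : Fin k → X) :
    Matrix (Fin k) (Fin k) ℝ :=
  Matrix.of fun i j => f i (p j)

theorem IsTSystemOn.det_collocationMatrix_ne_zero {X : Type*} {k n : ℕ} {f : Fin k → X → ℝ}
    {S : Set X} (hT : IsTSystemOn n f S) (hnk : n < k) {p : Fin k → X}
    (hp : Function.Injective p) (hpS : ∀ j, p j ∈ S) : (collocationMatrix f p).det ≠ 0 := by
  intro hdet
  obtain ⟨a, ha, hvec⟩ := exists_vecMul_eq_zero_iff.mpr hdet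
  have hzeros : Set.range p ⊆ {x ∈ S | ∑ i, a i * f i x = 0} := by
    rintro _ ⟨j, rfl⟩
    exact ⟨hpS j, by simpa [vecMul, dotProduct, collocationMatrix] using congrFun hvec j⟩
  have hk : (k : ℕ∞) ≤ n := calc
    (k : ℕ∞) = (Set.range p).encard := by
      rw [← Set.image_univ, hp.encard_image, Set.encard_univ, ENat.card_eq_coe_fintype_card,
        Fintype.card_fin]
    _ ≤ {x ∈ S | ∑ i, a i * f i x = 0}.encard := Set.encard_le_encard hzeros
    _ ≤ n := hT a ha
  exact absurd (by exact_mod_cast hk) hnk.not_ge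

theorem collocationMatrix_comp_perm {X : Type*} {k : ℕ} (f : Fin k → X → ℝ) (p : Fin k → X)
    (σ : Equiv.Perm (Fin k)) :
    collocationMatrix f (p ∘ σ) = (collocationMatrix f p).submatrix id σ :=
  rfl

theorem continuous_det_collocationMatrix {X Y : Type*} [TopologicalSpace X] [TopologicalSpace Y]
    {k : ℕ} {f : Fin k → X → ℝ} {S : Set X} (hf : ∀ i, ContinuousOn (f i) S) {p : Y → Fin k → X}
    (hp : ∀ j, Continuous fun y => p y j) (hpS : ∀ y j, p y j ∈ S) :
    Continuous fun y => (collocationMatrix f (p y)).det :=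
  Continuous.matrix_det <| continuous_matrix fun i j =>
    (hf i).comp_continuous (hp j) fun y => hpS y j

theorem det_submatrix_finRotate {R : Type*} [CommRing R] (n : ℕ)
    (A : Matrix (Fin (n + 1)) (Fin (n + 1)) R) :
    (A.submatrix id (finRotate (n + 1))).det = (-1) ^ n * A.det := by
  rw [det_permute', sign_finRotate, Nat.add_sub_cancel]
  push_cast
  rfl

theorem exists_eq_zero_of_map_eq_neg {g : ℝ → ℝ} (hg : Continuous g) (a b : ℝ)
    (hab : g b = -g a) : ∃ c, g c = 0 := by
  have hzero : (0 : ℝ) ∈ Set.uIcc (g a) (g b) := by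
    rw [hab, Set.mem_uIcc]
    rcases le_total (g a) 0 with h | h
    · exact Or.inl ⟨h, by linarith⟩
    · exact Or.inr ⟨by linarith, h⟩
  obtain ⟨c, -, hc⟩ := intermediate_value_uIcc hg.continuousOn hzero
  exact ⟨c, hc⟩

noncomputable def circlePoint (t : ℝ) : ℝ × ℝ := (cos t, sin t)

theorem circlePoint_mem_unitCircle (t : ℝ) : circlePoint t ∈ unitCircle :=
  cos_sq_add_sin_sq t

theorem continuous_circlePoint : Continuous circlePoint :=
  continuous_cos.prodMk continuous_sin

theorem circlePoint_add_two_pi (t : ℝ) : circlePoint (t + 2 * π) = circlePoint t := by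
  simp [circlePoint]

theorem eq_of_circlePoint_eq {a b : ℝ} (h : circlePoint a = circlePoint b)
    (hab : |a - b| < 2 * π) : a = b := by
  obtain ⟨k, hk⟩ := Real.Angle.angle_eq_iff_two_pi_dvd_sub.mp
    (Real.Angle.cos_sin_inj (congrArg Prod.fst h) (congrArg Prod.snd h))
  have hk0 : k = 0 := by
    rw [hk, abs_mul, abs_of_pos two_pi_pos] at hab
    have : |(k : ℝ)| < 1 := (mul_lt_iff_lt_one_right two_pi_pos).mp hab
    exact Int.abs_lt_one_iff.mp (by exact_mod_cast this)
  rw [hk0, Int.cast_zero, mul_zero, sub_eq_zero] at hk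
  exact hk

noncomputable def equispacedPoints (n : ℕ) (θ : ℝ) (j : Fin (n + 1)) : ℝ × ℝ :=
  circlePoint (θ + 2 * π * j / (n + 1))

theorem equispacedPoints_injective (n : ℕ) (θ : ℝ) :
    Function.Injective (equispacedPoints n θ) := by
  intro j j' h
  have hn : (0 : ℝ) < n + 1 := by positivity
  have hdist : |((j : ℕ) : ℝ) - (j' : ℕ)| < n + 1 :=
    abs_sub_lt_of_nonneg_of_lt (Nat.cast_nonneg _) (by exact_mod_cast j.isLt)
      (Nat.cast_nonneg _) (by exact_mod_cast j'.isLt)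
  have hangle := eq_of_circlePoint_eq h (by
    rw [add_sub_add_left_eq_sub, ← sub_div, ← mul_sub, abs_div, abs_mul, abs_of_pos two_pi_pos,
      abs_of_pos hn, div_lt_iff₀ hn]
    exact mul_lt_mul_of_pos_left hdist two_pi_pos)
  rw [add_right_inj, div_left_inj' hn.ne', mul_right_inj' two_pi_pos.ne'] at hangle
  exact Fin.ext (by exact_mod_cast hangle)

theorem equispacedPoints_rotate (n : ℕ) (θ : ℝ) :
    equispacedPoints n (θ + 2 * π / (n + 1)) = equispacedPoints n θ ∘ finRotate (n + 1) := by
  funext j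
  have hn : (n : ℝ) + 1 ≠ 0 := by positivity
  simp only [Function.comp_apply, equispacedPoints, coe_finRotate]
  split_ifs with hj
  · subst hj
    conv_rhs => rw [← circlePoint_add_two_pi]
    congr 1
    field_simp
    push_cast
    ring
  · congr 1
    push_cast
    field_simp
    ring

theorem even_order_of_periodic_tsystem_general (n : ℕ)
    (f : Fin (n + 1) → (ℝ × ℝ) → ℝ)
    (hcont : ∀ i, ContinuousOn (f i) unitCircle)
    (hT : IsTSystemOn n f unitCircle) :
    Even n := by
  set D : ℝ → ℝ := fun θ => (collocationMatrix f (equispacedPoints n θ)).det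
  have hD_ne : ∀ θ, D θ ≠ 0 := fun θ =>
    hT.det_collocationMatrix_ne_zero n.lt_succ_self (equispacedPoints_injective n θ)
      fun _ => circlePoint_mem_unitCircle _
  have hD_cont : Continuous D :=
    continuous_det_collocationMatrix hcont
      (fun _ => continuous_circlePoint.comp (by fun_prop)) fun _ _ => circlePoint_mem_unitCircle _
  have hD_rotate : D (2 * π / (n + 1)) = (-1) ^ n * D 0 := by
    simp only [D, ← det_submatrix_finRotate, ← collocationMatrix_comp_perm,
      ← equispacedPoints_rotate, zero_add]
  by_contra hodd
  rw [Nat.not_even_iff_odd.mp hodd |>.neg_one_pow, neg_one_mul] at hD_rotate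
  obtain ⟨θ, hθ⟩ := exists_eq_zero_of_map_eq_neg hD_cont 0 _ hD_rotate
  exact hD_ne θ hθ

/-- the order of a continuous T-system on the unit circle is even. -/
theorem even_order_of_periodic_tsystem (n : ℕ) (hn : 1 ≤ n)
    (f : Fin (n + 1) → (ℝ × ℝ) → ℝ)
    (hcont : ∀ i, ContinuousOn (f i) unitCircle)
    (hT : IsTSystemOn n f unitCircle) :
    Even n :=
  even_order_of_periodic_tsystem_general n f hcont hT
end

section
/- Let n ≥ 1, let (f_0, …, f_n) be a T-system of order n on a set X with at least n+1 elements, let x_1, …, x_n ∈ X be n pairwise distinct points, and let f be an element of the linear span of f_0, …, f_n. Then the following are equivalent: (i) f(x_i) = 0 for all i = 1, …, n; (ii) there exists a constant c ∈ ℝ such that for all x ∈ X, f(x) = c · det M(x), where M(x) is the (n+1)×(n+1) matrix whose first row is (f_0(x), f_1(x), …, f_n(x)) and whose (j+1)-st row is (f_0(x_j), f_1(x_j), …, f_n(x_j)) for j = 1, …, n. -/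
/-- an element `f = ∑ a j • F j` of the span of a T-system of order `n`
vanishes at `n` pairwise distinct given points `x 1, …, x n` iff it is a constant
multiple of the determinant `x ↦ det M(x)` whose first row is `(F j x)_j` and whose
remaining rows are `(F j (x i))_j`. -/
theorem tsystem_vanishing_iff_det_multiple {X : Type*} (n : ℕ) (hn : 1 ≤ n)
    (hX : ∃ g : Fin (n + 1) → X, Function.Injective g)
    (F : Fin (n + 1) → X → ℝ) (hT : IsTSystemOn n F Set.univ)
    (x : Fin n → X) (hx : Function.Injective x)
    (a : Fin (n + 1) → ℝ) :
    (∀ i, ∑ j, a j * F j (x i) = 0) ↔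
      ∃ c : ℝ, ∀ t : X, ∑ j, a j * F j t =
        c * Matrix.det (Matrix.of
          (Fin.cons (fun j => F j t) (fun i j => F j (x i)))) := by
  classical
  set M : X → Matrix (Fin (n+1)) (Fin (n+1)) ℝ :=
    fun t => Matrix.of (Fin.cons (fun j => F j t) (fun i j => F j (x i))) with hM
  -- det M (x i) = 0 since two rows coincide
  have hdetx : ∀ i, (M (x i)).det = 0 := by
    intro i
    apply Matrix.det_zero_of_row_eq (i := 0) (j := i.succ) (Fin.succ_ne_zero i).symm
    funext j
    simp [hM, Fin.cons_zero, Fin.cons_succ]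
  -- key lemma: a nontrivial combination cannot vanish at n+1 distinct points
  have keyA : ∀ (v : Fin (n+1) → ℝ) (y : X), y ∉ Set.range x →
      (∀ i, ∑ j, v j * F j (x i) = 0) → (∑ j, v j * F j y = 0) → v = 0 := by
    intro v y hy hvx hvy
    by_contra hv
    have hcard := hT v hv
    have hsub : insert y (Set.range x) ⊆ {t ∈ Set.univ | ∑ j, v j * F j t = 0} := by
      rintro t (rfl | ⟨i, rfl⟩)
      · exact ⟨trivial, hvy⟩
      · exact ⟨trivial, hvx i⟩
    have h1 : (insert y (Set.range x)).encard = (n : ℕ∞) + 1 := by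
      rw [Set.encard_insert_of_notMem hy, ← Set.image_univ, hx.encard_image,
        Set.encard_univ]
      simp
    have h2 : ((n : ℕ∞) + 1) ≤ (n : ℕ∞) := by
      rw [← h1]; exact le_trans (Set.encard_mono hsub) hcard
    have : ((n + 1 : ℕ) : ℕ∞) ≤ ((n : ℕ) : ℕ∞) := by
      simpa using h2
    rw [Nat.cast_le] at this
    omega
  -- find a point outside the range of x
  obtain ⟨g, hg⟩ := hX
  have hns : ¬ (Set.range g ⊆ Set.range x) := by
    intro h
    have h2 := Set.encard_mono h
    rw [← Set.image_univ, ← Set.image_univ, hg.encard_image, hx.encard_image,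
      Set.encard_univ, Set.encard_univ] at h2
    simp only [ENat.card_eq_coe_fintype_card, Fintype.card_fin, Nat.cast_le] at h2
    omega
  obtain ⟨y, ⟨_, hyg⟩, hy⟩ := Set.not_subset.mp hns
  -- cofactor expansion: det M t = ∑ j, b j * F j t
  set b : Fin (n+1) → ℝ :=
    fun j => (-1) ^ (j : ℕ) * ((M y).submatrix Fin.succ j.succAbove).det with hb
  have hexp : ∀ t, (M t).det = ∑ j, b j * F j t := by
    intro t
    rw [Matrix.det_succ_row_zero]
    refine Finset.sum_congr rfl fun j _ => ?_
    have hsubm : (M t).submatrix Fin.succ j.succAbove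
        = (M y).submatrix Fin.succ j.succAbove := by
      ext i k
      simp [hM, Matrix.submatrix_apply, Fin.cons_succ]
    have h0 : (M t) 0 j = F j t := by simp [hM, Fin.cons_zero]
    rw [hsubm, h0, hb]; ring
  -- det M y ≠ 0
  have hMy : (M y).det ≠ 0 := by
    intro h0
    obtain ⟨v, hv, hMv⟩ := (Matrix.exists_mulVec_eq_zero_iff).mpr h0
    have hrow : ∀ i, ∑ j, (M y) i j * v j = 0 := by
      intro i
      have := congrFun hMv i
      simpa [Matrix.mulVec, dotProduct] using this
    apply hv
    apply keyA v y hy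
    · intro i
      have := hrow i.succ
      simp only [hM, Matrix.of_apply, Fin.cons_succ] at this
      rw [← this]
      exact Finset.sum_congr rfl fun j _ => mul_comm _ _
    · have := hrow 0
      simp only [hM, Matrix.of_apply, Fin.cons_zero] at this
      rw [← this]
      exact Finset.sum_congr rfl fun j _ => mul_comm _ _
  have hby : ∑ j, b j * F j y ≠ 0 := by rw [← hexp]; exact hMy
  have hbx : ∀ i, ∑ j, b j * F j (x i) = 0 := by
    intro i; rw [← hexp]; exact hdetx i
  constructor
  · -- forward direction
    intro hva
    refine ⟨(∑ j, a j * F j y) / (∑ j, b j * F j y), fun t => ?_⟩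
    set c : ℝ := (∑ j, a j * F j y) / (∑ j, b j * F j y) with hc
    have hd : (fun j => a j - c * b j) = 0 := by
      apply keyA _ y hy
      · intro i
        have : ∑ j, (a j - c * b j) * F j (x i)
            = (∑ j, a j * F j (x i)) - c * (∑ j, b j * F j (x i)) := by
          rw [Finset.mul_sum, ← Finset.sum_sub_distrib]
          exact Finset.sum_congr rfl fun j _ => by ring
        rw [this, hva i, hbx i]; ring
      · have : ∑ j, (a j - c * b j) * F j y
            = (∑ j, a j * F j y) - c * (∑ j, b j * F j y) := by
          rw [Finset.mul_sum, ← Finset.sum_sub_distrib]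
          exact Finset.sum_congr rfl fun j _ => by ring
        rw [this, hc, div_mul_cancel₀ _ hby]; ring
    have ha : ∀ j, a j = c * b j := by
      intro j
      have := congrFun hd j
      simp only [Pi.zero_apply] at this
      linarith
    rw [hexp t, Finset.mul_sum]
    exact Finset.sum_congr rfl fun j _ => by rw [ha j]; ring
  · -- backward direction
    rintro ⟨c, hc⟩ i
    rw [hc (x i), hdetx i, mul_zero]
end

section
/- Let n ≥ 1, let (f_0, …, f_n) be a continuous T-system of order n on the interval [a,b] with a < b, and let f be a nonzero element of the linear span of f_0, …, f_n. If f has k pairwise distinct non-nodal zeros and l pairwise distinct nodal zeros in [a,b] (all k + l zeros pairwise distinct), then 2k + l ≤ n. -/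
/-- `x₀` is a non-nodal zero of `f` on `[a,b]`: it lies in the open interval
`(a,b)`, `f x₀ = 0`, and `f` does not change sign at `x₀`. -/
def IsNonNodalZero (f : ℝ → ℝ) (a b x₀ : ℝ) : Prop :=
  x₀ ∈ Set.Ioo a b ∧ f x₀ = 0 ∧
    ((∀ᶠ y in nhds x₀, 0 ≤ f y) ∨ (∀ᶠ y in nhds x₀, f y ≤ 0))

/-- `x₀` is a nodal zero of `f` on `[a,b]`: it is a zero in `[a,b]` which is
either an endpoint or a sign change of `f`. -/
def IsNodalZero (f : ℝ → ℝ) (a b x₀ : ℝ) : Prop :=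
  x₀ ∈ Set.Icc a b ∧ f x₀ = 0 ∧ ¬ IsNonNodalZero f a b x₀


/-! Perturbation argument. Interpolation, possible because a T-system of order `n` is unisolvent
on any `n + 1` points, gives `g` in the span with `g(xᵢ) = σᵢ`, the sign of `f` near the non-nodal
zero `xᵢ`, and `g = 0` at the nodal zeros. The zeros of `f ≠ 0` are finitely many, so `σᵢ f > 0`
on a punctured neighbourhood of `xᵢ`; for small `ε > 0`, `σᵢ (f - ε g)` is then positive on both
sides of `xᵢ` but equals `-ε` at `xᵢ`. Thus `f - ε g` has two zeros near each `xᵢ` and still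
vanishes at every nodal zero: `2k + l` zeros of a nonzero element of the span. -/

open Set Filter Topology Function Metric

theorem IsTSystemOn.card_le {X ι : Type*} [Finite ι] {k n : ℕ} {f : Fin k → X → ℝ}
    {S : Set X} (hT : IsTSystemOn n f S) {c : Fin k → ℝ} (hc : c ≠ 0) {z : ι → X}
    (hz : Injective z) (hzS : ∀ i, z i ∈ S) (hzero : ∀ i, ∑ j, c j * f j (z i) = 0) :
    Nat.card ι ≤ n := by
  have hrange : range z ⊆ {x ∈ S | ∑ j, c j * f j x = 0} := by
    rintro _ ⟨i, rfl⟩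
    exact ⟨hzS i, hzero i⟩
  have := hz.encard_range.trans ((encard_le_encard hrange).trans (hT c hc))
  rwa [ENat.card_eq_coe_natCard, Nat.cast_le] at this

theorem IsTSystemOn.exists_interpolation {X ι : Type*} [Finite ι] {n : ℕ}
    {f : Fin (n + 1) → X → ℝ} {S : Set X} (hT : IsTSystemOn n f S)
    (hS : (n + 1 : ℕ∞) ≤ S.encard) {z : ι → X} (hz : Injective z) (hzS : ∀ i, z i ∈ S)
    (hcard : Nat.card ι ≤ n + 1) (v : ι → ℝ) :
    ∃ d : Fin (n + 1) → ℝ, ∀ i, ∑ j, d j * f j (z i) = v i := by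
  obtain ⟨T, hzT, hTS, hTcard⟩ := exists_superset_subset_encard_eq (range_subset_iff.2 hzS)
    (by rw [← image_univ, hz.encard_image, encard_univ, ENat.card_eq_coe_natCard]
        exact_mod_cast hcard) hS
  have hTfin : T.Finite := finite_of_encard_eq_coe (k := n + 1) hTcard
  have hTcard' : T.ncard = n + 1 := by
    rw [← ENat.natCast_inj, hTfin.cast_ncard_eq, hTcard]
    rfl
  have := hTfin.to_subtype
  let _ : Fintype T := Fintype.ofFinite T
  let M : Matrix (Fin (n + 1)) T ℝ := fun j t => f j t
  have hinj : Injective M.vecMulLinear := by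
    rw [← LinearMap.ker_eq_bot, LinearMap.ker_eq_bot']
    intro d hd
    by_contra hd0
    have := hT.card_le hd0 (z := ((↑) : T → X)) Subtype.val_injective (fun t => hTS t.2)
      (fun t => congrFun hd t)
    rw [Nat.card_coe_set_eq, hTcard'] at this
    omega
  have hsurj := (LinearMap.injective_iff_surjective_of_finrank_eq_finrank
    (by simp [hTcard'])).1 hinj
  obtain ⟨d, hd⟩ := hsurj fun t => extend z v 0 t
  exact ⟨d, fun i => (congrFun hd ⟨z i, hzT (mem_range_self i)⟩).trans (hz.extend_apply v 0 i)⟩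

theorem IsTSystemOn.eventually_ne_zero {X : Type*} [TopologicalSpace X] [T1Space X] {k n : ℕ}
    {f : Fin k → X → ℝ} {S : Set X} (hT : IsTSystemOn n f S) {c : Fin k → ℝ} (hc : c ≠ 0)
    {x₀ : X} (hS : S ∈ 𝓝 x₀) : ∀ᶠ x in 𝓝[≠] x₀, ∑ j, c j * f j x ≠ 0 := by
  have hfin := (finite_of_encard_le_coe (hT c hc)).eventually_cofinite_notMem
  filter_upwards [nhdsWithin_le_nhds hS, nhdsNE_le_cofinite x₀ hfin] with x hxS hx hzero
  exact hx ⟨hxS, hzero⟩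

theorem IsNonNodalZero.exists_sign {f : ℝ → ℝ} {a b x₀ : ℝ} (h : IsNonNodalZero f a b x₀)
    (hiso : ∀ᶠ t in 𝓝[≠] x₀, f t ≠ 0) : ∃ σ : ℝ, σ ≠ 0 ∧ ∀ᶠ t in 𝓝[≠] x₀, 0 < σ * f t := by
  rcases h.2.2 with hpos | hneg
  · refine ⟨1, one_ne_zero, ?_⟩
    filter_upwards [nhdsWithin_le_nhds hpos, hiso] with t ht ht0
    simpa using lt_of_le_of_ne ht (Ne.symm ht0)
  · refine ⟨-1, by norm_num, ?_⟩
    filter_upwards [nhdsWithin_le_nhds hneg, hiso] with t ht ht0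
    simpa using lt_of_le_of_ne ht ht0

theorem eq_of_mem_ball_half {α ι : Type*} [PseudoMetricSpace α] {x : ι → α} {r : ι → ℝ}
    (hsep : ∀ i j, i ≠ j → r i ≤ dist (x i) (x j)) {i j : ι} {t : α}
    (hi : t ∈ ball (x i) (r i / 2)) (hj : t ∈ ball (x j) (r j / 2)) : i = j := by
  by_contra hij
  have hdist := dist_triangle_left (x i) (x j) t
  have := hsep i j hij
  have := hsep j i (Ne.symm hij)
  rw [mem_ball] at hi hj
  rw [dist_comm (x j)] at *
  linarith

theorem exists_pos_forall_mul_lt {ι : Type*} [Finite ι] {A B : ι → ℝ} (hB : ∀ i, 0 < B i) :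
    ∃ ε > 0, ∀ i, ε * A i < B i := by
  have : ∀ᶠ ε in 𝓝 (0 : ℝ), ∀ i, ε * A i < B i := eventually_all.2 fun i =>
    (continuous_id.mul continuous_const).tendsto' 0 0 (zero_mul _) |>.eventually_lt_const (hB i)
  obtain ⟨ε, hε, hε0⟩ :=
    ((this.filter_mono (nhdsWithin_le_nhds (s := Ioi 0))).and self_mem_nhdsWithin).exists
  exact ⟨ε, hε0, hε⟩

theorem sum_sub_smul_mul {ι : Type*} [Fintype ι] (c d v : ι → ℝ) (ε : ℝ) :
    ∑ j, (c - ε • d) j * v j = ∑ j, c j * v j - ε * ∑ j, d j * v j := by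
  simp [sub_mul, Finset.sum_sub_distrib, Finset.mul_sum, mul_assoc]

theorem exists_zeros_sub_mul_near {f g : ℝ → ℝ} {x₀ δ σ ε : ℝ} (hδ : 0 < δ)
    (hf : ContinuousOn f (Icc (x₀ - δ) (x₀ + δ))) (hg : ContinuousOn g (Icc (x₀ - δ) (x₀ + δ)))
    (hfx : f x₀ = 0) (hσg : 0 < σ * g x₀) (hε : 0 < ε)
    (hleft : ε * (σ * g (x₀ - δ)) < σ * f (x₀ - δ))
    (hright : ε * (σ * g (x₀ + δ)) < σ * f (x₀ + δ)) :
    (∃ u ∈ Ioo (x₀ - δ) x₀, f u = ε * g u) ∧ ∃ w ∈ Ioo x₀ (x₀ + δ), f w = ε * g w := by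
  set φ : ℝ → ℝ := fun t => σ * (f t - ε * g t)
  have hφ : ContinuousOn φ (Icc (x₀ - δ) (x₀ + δ)) := by fun_prop
  have hφx : φ x₀ < 0 := by simp only [φ, hfx]; nlinarith
  have hφ0 : ∀ t, φ t = 0 → f t = ε * g t := fun t ht =>
    sub_eq_zero.1 ((mul_eq_zero.1 ht).resolve_left (left_ne_zero_of_mul hσg.ne'))
  obtain ⟨u, hu, hu0⟩ := intermediate_value_Ioo' (by linarith)
    (hφ.mono (Icc_subset_Icc_right (by linarith))) ⟨hφx, by simp only [φ]; linarith⟩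
  obtain ⟨w, hw, hw0⟩ := intermediate_value_Ioo (by linarith)
    (hφ.mono (Icc_subset_Icc_left (by linarith))) ⟨hφx, by simp only [φ]; linarith⟩
  exact ⟨⟨u, hu, hφ0 u hu0⟩, ⟨w, hw, hφ0 w hw0⟩⟩

theorem exists_separating_radii {ι : Type*} {f : ℝ → ℝ} {s : Set ℝ} {x σ : ι → ℝ}
    (hx : Injective x) (hs : ∀ i, s ∈ 𝓝 (x i)) (hfx : ∀ i, f (x i) = 0)
    (hσf : ∀ i, ∀ᶠ t in 𝓝[≠] x i, 0 < σ i * f t) :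
    ∃ r : ι → ℝ, (∀ i, 0 < r i) ∧
      (∀ i, ∀ t ∈ ball (x i) (r i), t ∈ s ∧ (t ≠ x i → 0 < σ i * f t)) ∧
      ∀ i j, i ≠ j → r i ≤ dist (x i) (x j) := by
  choose r hr hball using fun i =>
    eventually_nhds_iff_ball.1 (Eventually.and (hs i) (eventually_nhdsWithin_iff.1 (hσf i)))
  refine ⟨r, hr, hball, fun i j hij => not_lt.1 fun hlt => ?_⟩
  have := (hball i (x j) (by rwa [mem_ball, dist_comm])).2 (hx.ne hij.symm)
  rw [hfx j, mul_zero] at this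
  exact this.false

theorem exists_doubled_zeros_sub_mul {ι : Type*} [Finite ι] {f g : ℝ → ℝ} {s : Set ℝ}
    (hf : ContinuousOn f s) (hg : ContinuousOn g s) {x σ : ι → ℝ} (hx : Injective x)
    (hs : ∀ i, s ∈ 𝓝 (x i)) (hfx : ∀ i, f (x i) = 0)
    (hσf : ∀ i, ∀ᶠ t in 𝓝[≠] x i, 0 < σ i * f t) (hσg : ∀ i, 0 < σ i * g (x i)) :
    ∃ ε > 0, ∃ u : ι ⊕ ι → ℝ, Injective u ∧
      ∀ p, u p ∈ s ∧ f (u p) ≠ 0 ∧ f (u p) = ε * g (u p) := by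
  obtain ⟨r, hr, hball, hsep⟩ := exists_separating_radii hx hs hfx hσf
  have hIcc : ∀ i, Icc (x i - r i / 2) (x i + r i / 2) ⊆ ball (x i) (r i) := fun i => by
    rw [← Real.closedBall_eq_Icc]; exact closedBall_subset_ball (half_lt_self (hr i))
  have hend : ∀ i, ∀ t ∈ ({x i - r i / 2, x i + r i / 2} : Set ℝ), 0 < σ i * f t := by
    rintro i t (rfl | rfl) <;> refine (hball i _ (hIcc i ⟨?_, ?_⟩)).2 ?_ <;> linarith [hr i]
  obtain ⟨ε, hε, hεlt⟩ := exists_pos_forall_mul_lt (ι := ι ⊕ ι)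
    (A := Sum.elim (fun i => σ i * g (x i - r i / 2)) (fun i => σ i * g (x i + r i / 2)))
    (B := Sum.elim (fun i => σ i * f (x i - r i / 2)) (fun i => σ i * f (x i + r i / 2)))
    (by rintro (i | i) <;> exact hend i _ (by simp))
  have hzeros := fun i => exists_zeros_sub_mul_near (half_pos (hr i))
    (hf.mono fun t ht => (hball i t (hIcc i ht)).1) (hg.mono fun t ht => (hball i t (hIcc i ht)).1)
    (hfx i) (hσg i) hε (hεlt (.inl i)) (hεlt (.inr i))
  choose u hu hu0 using fun i => (hzeros i).1
  choose w hw hw0 using fun i => (hzeros i).2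
  have hu_ball : ∀ i, u i ∈ ball (x i) (r i / 2) := fun i => by
    rw [Real.ball_eq_Ioo]; exact ⟨(hu i).1, by linarith [(hu i).2, hr i]⟩
  have hw_ball : ∀ i, w i ∈ ball (x i) (r i / 2) := fun i => by
    rw [Real.ball_eq_Ioo]; exact ⟨by linarith [(hw i).1, hr i], (hw i).2⟩
  refine ⟨ε, hε, Sum.elim u w, ?_, ?_⟩
  · refine Injective.sumElim (fun i j h => eq_of_mem_ball_half hsep (hu_ball i) (h ▸ hu_ball j))
      (fun i j h => eq_of_mem_ball_half hsep (hw_ball i) (h ▸ hw_ball j)) fun i j h => ?_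
    obtain rfl := eq_of_mem_ball_half hsep (hu_ball i) (h ▸ hw_ball j)
    linarith [(hu i).2, (hw i).1]
  · have hnear : ∀ i, ∀ t ∈ ball (x i) (r i / 2), t ≠ x i → t ∈ s ∧ f t ≠ 0 :=
      fun i t ht hne =>
        have h := hball i t (ball_subset_ball (half_le_self (hr i).le) ht)
        ⟨h.1, right_ne_zero_of_mul (h.2 hne).ne'⟩
    rintro (i | i)
    · exact (hnear i _ (hu_ball i) (hu i).2.ne).imp_right (⟨·, hu0 i⟩)
    · exact (hnear i _ (hw_ball i) (hw i).1.ne').imp_right (⟨·, hw0 i⟩)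

theorem tsystem_nodal_nonnodal_zero_bound_general (n : ℕ) (a b : ℝ) (hab : a < b)
    (F : Fin (n + 1) → ℝ → ℝ) (hF : ∀ i, ContinuousOn (F i) (Set.Icc a b))
    (hT : IsTSystemOn n F (Set.Icc a b))
    (c : Fin (n + 1) → ℝ) (hc : c ≠ 0)
    (k l : ℕ) (x : Fin k → ℝ) (y : Fin l → ℝ)
    (hdist : Function.Injective (Sum.elim x y))
    (hx : ∀ i, IsNonNodalZero (fun t => ∑ j, c j * F j t) a b (x i))
    (hy : ∀ i, IsNodalZero (fun t => ∑ j, c j * F j t) a b (y i)) :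
    2 * k + l ≤ n := by
  have hmem : ∀ p, Sum.elim x y p ∈ Icc a b := by
    rintro (i | j)
    exacts [Ioo_subset_Icc_self (hx i).1, (hy j).1]
  have hkl : k + l ≤ n := by
    simpa using hT.card_le hc hdist hmem (by rintro (i | j); exacts [(hx i).2.1, (hy j).2.1])
  obtain rfl | hk := Nat.eq_zero_or_pos k
  · omega
  have hnhds : ∀ i, Icc a b ∈ 𝓝 (x i) := fun i => Icc_mem_nhds (hx i).1.1 (hx i).1.2
  choose σ hσ0 hσf using fun i => (hx i).exists_sign (hT.eventually_ne_zero hc (hnhds i))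
  obtain ⟨d, hd⟩ := hT.exists_interpolation (by simp [(Icc_infinite hab).encard_eq]) hdist hmem
    (by simp only [Nat.card_eq_fintype_card, Fintype.card_sum, Fintype.card_fin]; omega)
    (Sum.elim σ 0)
  have hfx : ∀ i, ∑ j, c j * F j (x i) = 0 := fun i => (hx i).2.1
  have hgx : ∀ i, ∑ j, d j * F j (x i) = σ i := fun i => hd (.inl i)
  have hgy : ∀ i, ∑ j, d j * F j (y i) = 0 := fun i => hd (.inr i)
  obtain ⟨ε, hε, u, hu, hu_zero⟩ := exists_doubled_zeros_sub_mul
    (g := fun t => ∑ j, d j * F j t) (by fun_prop) (by fun_prop) (hdist.comp Sum.inl_injective)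
    hnhds hfx hσf (fun i => by simpa [hgx i] using mul_self_pos.2 (hσ0 i))
  have hcomb := fun t => sum_sub_smul_mul c d (fun j => F j t) ε
  have hne : c - ε • d ≠ 0 := fun h0 => by
    have := hcomb (x ⟨0, hk⟩)
    rw [h0, hfx, hgx] at this
    simp [hε.ne', hσ0] at this
  have hcount := hT.card_le hne
    (hu.sumElim (hdist.comp Sum.inr_injective) fun p j h => (hu_zero p).2.1 (h ▸ (hy j).2.1))
    (by rintro (p | j); exacts [(hu_zero p).1, (hy j).1])
    (by rintro (p | j) <;> rw [hcomb]
        exacts [sub_eq_zero.2 (hu_zero p).2.2, by simp [(hy j).2.1, hgy j]])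
  simp only [Nat.card_eq_fintype_card, Fintype.card_sum, Fintype.card_fin] at hcount
  omega

/-- if a nonzero element of the span of a continuous T-system of order
`n` on `[a,b]` has `k` pairwise distinct non-nodal zeros and `l` pairwise distinct
nodal zeros (all `k + l` zeros pairwise distinct), then `2k + l ≤ n`. -/
theorem tsystem_nodal_nonnodal_zero_bound (n : ℕ) (hn : 1 ≤ n) (a b : ℝ) (hab : a < b)
    (F : Fin (n + 1) → ℝ → ℝ) (hF : ∀ i, ContinuousOn (F i) (Set.Icc a b))
    (hT : IsTSystemOn n F (Set.Icc a b))
    (c : Fin (n + 1) → ℝ) (hc : c ≠ 0)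
    (k l : ℕ) (x : Fin k → ℝ) (y : Fin l → ℝ)
    (hdist : Function.Injective (Sum.elim x y))
    (hx : ∀ i, IsNonNodalZero (fun t => ∑ j, c j * F j t) a b (x i))
    (hy : ∀ i, IsNodalZero (fun t => ∑ j, c j * F j t) a b (y i)) :
    2 * k + l ≤ n :=
  tsystem_nodal_nonnodal_zero_bound_general n a b hab F hF hT c hc k l x y hdist hx hy
end

section
/- Let n ≥ 1 and let α_0 < α_1 < … < α_n be real numbers. Then every nonzero linear combination f(x) = Σ_{i=0}^n a_i · x^{α_i} (with real coefficients a_i not all zero) has at most n zeros in (0, ∞). Equivalently, the family (x^{α_0}, …, x^{α_n}) of real power functions is a T-system of order n on every subset of (0, ∞) with at least n+1 elements. -/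
/-!
Dividing `∑ aᵢ x^{αᵢ}` by `x^{α₀}` does not move its zeros in `(0, ∞)` and turns the first
term into the constant `a₀`. Differentiating then leaves a combination of the `n` powers
`x^{αᵢ - α₀ - 1}`, `i ≥ 1`, whose exponents are still increasing and whose coefficients
`aᵢ (αᵢ - α₀)` vanish only if the quotient is the nonzero constant `a₀`. By Rolle's theorem a
function has at most one zero more on an interval than its derivative, so induction on the
number of terms bounds the zeros by `n`.
-/

open Set Real

theorem IsTSystemOn.mono {X : Type*} {k n : ℕ} {f : Fin k → X → ℝ} {S T : Set X}
    (h : IsTSystemOn n f S) (hTS : T ⊆ S) : IsTSystemOn n f T :=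
  fun a ha => (encard_mono fun _ => And.imp_left fun hx => hTS hx).trans (h a ha)

theorem exists_strictMono_fin_of_natCast_le_encard {α : Type*} [LinearOrder α] {s : Set α}
    {k : ℕ} (hk : (k : ℕ∞) ≤ s.encard) : ∃ p : Fin k → α, StrictMono p ∧ ∀ i, p i ∈ s := by
  obtain ⟨t, hts, htk⟩ := exists_subset_encard_eq hk
  have ht : t.Finite := finite_of_encard_eq_coe htk
  have hcard : ht.toFinset.card = k := by
    rw [← Nat.cast_inj (R := ℕ∞), ← ht.encard_eq_coe_toFinset_card, htk]
  exact ⟨ht.toFinset.orderEmbOfFin hcard, (ht.toFinset.orderEmbOfFin hcard).strictMono,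
    fun i => hts (ht.mem_toFinset.mp (Finset.orderEmbOfFin_mem _ _ i))⟩

section Rolle

variable {f f' : ℝ → ℝ} {s : Set ℝ}

theorem natCast_le_encard_zeros_deriv_of_strictMono (hs : s.OrdConnected)
    (hf : ∀ x ∈ s, HasDerivAt f (f' x) x) {m : ℕ} {p : Fin (m + 1) → ℝ} (hp : StrictMono p)
    (hps : ∀ i, p i ∈ s) (hfp : ∀ i, f (p i) = 0) :
    (m : ℕ∞) ≤ {x ∈ s | f' x = 0}.encard := by
  have hIcc (i : Fin m) : Icc (p i.castSucc) (p i.succ) ⊆ s := hs.out (hps _) (hps _)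
  have hrolle (i : Fin m) : ∃ c ∈ Ioo (p i.castSucc) (p i.succ), f' c = 0 :=
    exists_hasDerivAt_eq_zero (hp i.castSucc_lt_succ)
      (fun x hx => (hf x (hIcc i hx)).continuousAt.continuousWithinAt)
      ((hfp _).trans (hfp _).symm) fun x hx => hf x (hIcc i (Ioo_subset_Icc_self hx))
  choose c hc hfc using hrolle
  have hc_mono : StrictMono c := fun i j hij => calc
    c i < p i.succ := (hc i).2
    _ ≤ p j.castSucc := hp.monotone (Fin.succ_le_castSucc_iff.mpr hij)
    _ < c j := (hc j).1
  calc (m : ℕ∞) = ENat.card (Fin m) := by simp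
    _ ≤ (range c).encard := hc_mono.injective.encard_range
    _ ≤ {x ∈ s | f' x = 0}.encard := encard_mono <| range_subset_iff.mpr fun i =>
        ⟨hIcc i (Ioo_subset_Icc_self (hc i)), hfc i⟩

theorem encard_zeros_le_encard_zeros_deriv_add_one (hs : s.OrdConnected)
    (hf : ∀ x ∈ s, HasDerivAt f (f' x) x) :
    {x ∈ s | f x = 0}.encard ≤ {x ∈ s | f' x = 0}.encard + 1 := by
  refine ENat.forall_natCast_le_iff_le.mp fun k hk => ?_
  cases k with
  | zero => simp
  | succ m =>
    obtain ⟨p, hp, hpz⟩ := exists_strictMono_fin_of_natCast_le_encard hk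
    push_cast
    gcongr
    exact natCast_le_encard_zeros_deriv_of_strictMono hs hf hp (fun i => (hpz i).1)
      fun i => (hpz i).2

end Rolle

section PowerSums

variable {ι : Type*} [Fintype ι]

theorem sum_mul_rpow_eq_rpow_mul_sum_mul_rpow_sub (a α : ι → ℝ) (c : ℝ) {x : ℝ} (hx : 0 < x) :
    ∑ i, a i * x ^ α i = x ^ c * ∑ i, a i * x ^ (α i - c) := by
  rw [Finset.mul_sum]
  refine Finset.sum_congr rfl fun i _ => ?_
  rw [mul_left_comm, ← rpow_add hx, add_sub_cancel]

theorem hasDerivAt_sum_mul_rpow (a α : ι → ℝ) {x : ℝ} (hx : 0 < x) :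
    HasDerivAt (fun y => ∑ i, a i * y ^ α i) (∑ i, a i * (α i * x ^ (α i - 1))) x :=
  HasDerivAt.fun_sum fun i _ => (hasDerivAt_rpow_const (Or.inl hx.ne')).const_mul (a i)

end PowerSums

theorem encard_zeros_sum_mul_rpow_lt {k : ℕ} {α : Fin k → ℝ} (hα : StrictMono α)
    {a : Fin k → ℝ} (ha : a ≠ 0) :
    {x ∈ Ioi (0 : ℝ) | ∑ i, a i * x ^ α i = 0}.encard < k := by
  induction k with
  | zero => exact absurd (Subsingleton.elim a 0) ha
  | succ k ih =>
    set g : ℝ → ℝ := fun x => ∑ i, a i * x ^ (α i - α 0)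
    set b : Fin k → ℝ := fun i => a i.succ * (α i.succ - α 0)
    set γ : Fin k → ℝ := fun i => α i.succ - α 0 - 1
    have hzeros : {x ∈ Ioi (0 : ℝ) | ∑ i, a i * x ^ α i = 0} = {x ∈ Ioi 0 | g x = 0} := by
      refine sep_ext_iff.mpr fun x hx => ?_
      rw [sum_mul_rpow_eq_rpow_mul_sum_mul_rpow_sub a α (α 0) hx, mul_eq_zero,
        or_iff_right (rpow_pos_of_pos hx _).ne']
    have hg' : ∀ x ∈ Ioi (0 : ℝ), HasDerivAt g (∑ i, b i * x ^ γ i) x := fun x hx => by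
      convert hasDerivAt_sum_mul_rpow a (fun i => α i - α 0) hx using 1
      simp [Fin.sum_univ_succ, b, γ, mul_assoc]
    rw [hzeros]
    by_cases hb : b = 0
    · have ha_succ (i : Fin k) : a i.succ = 0 :=
        (mul_eq_zero.mp (congrFun hb i)).resolve_right (sub_pos.mpr (hα i.succ_pos)).ne'
      have ha0 : a 0 ≠ 0 := fun h => ha (funext fun i => Fin.cases h ha_succ i)
      have hg (x : ℝ) : g x = a 0 := by simp [g, Fin.sum_univ_succ, ha_succ]
      simp [hg, ha0]
    · have hγ : StrictMono γ := fun i j hij => by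
        simpa [γ] using hα (Fin.succ_lt_succ_iff.mpr hij)
      calc {x ∈ Ioi 0 | g x = 0}.encard
          ≤ {x ∈ Ioi 0 | ∑ i, b i * x ^ γ i = 0}.encard + 1 :=
            encard_zeros_le_encard_zeros_deriv_add_one ordConnected_Ioi hg'
        _ < k + 1 := (ENat.add_lt_add_iff_right ENat.one_ne_top).mpr (ih hγ hb)
        _ = ↑(k + 1) := (Nat.cast_succ k).symm

theorem powers_tsystem_on_Ioi_general (n : ℕ)
    (α : Fin (n + 1) → ℝ) (hα : StrictMono α) :
    (∀ a : Fin (n + 1) → ℝ, a ≠ 0 →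
      {x ∈ Set.Ioi (0 : ℝ) | ∑ i, a i * x ^ (α i) = 0}.encard ≤ (n : ℕ∞)) ∧
    (∀ S : Set ℝ, S ⊆ Set.Ioi 0 → (n + 1 : ℕ) ≤ S.encard →
      IsTSystemOn n (fun i (x : ℝ) => x ^ (α i)) S) := by
  have h : IsTSystemOn n (fun i (x : ℝ) => x ^ (α i)) (Ioi 0) := fun a ha =>
    ENat.lt_natCast_add_one_iff.mp (encard_zeros_sum_mul_rpow_lt hα ha)
  exact ⟨h, fun S hS _ => h.mono hS⟩

/-- for real exponents `α 0 < α 1 < … < α n`, every nontrivial linear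
combination `x ↦ ∑ a i * x ^ (α i)` has at most `n` zeros in `(0,∞)`; equivalently,
the power functions `x ^ (α 0), …, x ^ (α n)` form a T-system of order `n` on every
subset of `(0,∞)` with at least `n + 1` elements. -/
theorem powers_tsystem_on_Ioi (n : ℕ) (hn : 1 ≤ n)
    (α : Fin (n + 1) → ℝ) (hα : StrictMono α) :
    (∀ a : Fin (n + 1) → ℝ, a ≠ 0 →
      {x ∈ Set.Ioi (0 : ℝ) | ∑ i, a i * x ^ (α i) = 0}.encard ≤ (n : ℕ∞)) ∧
    (∀ S : Set ℝ, S ⊆ Set.Ioi 0 → (n + 1 : ℕ) ≤ S.encard →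
      IsTSystemOn n (fun i (x : ℝ) => x ^ (α i)) S) :=
  powers_tsystem_on_Ioi_general n α hα
end

section
/- Let n ≥ 1, let α_0 < α_1 < … < α_n be real numbers, and let 0 ≤ a < b; if a = 0 assume additionally that α_0 = 0 and all α_i ≥ 0. Let L be a real linear functional on the linear span V of the power functions x^{α_0}, …, x^{α_n} on [a,b]. Then the following are equivalent: (i) there exists a (positive Borel) measure μ on [a,b] such that L(x^{α_i}) = ∫_{[a,b]} x^{α_i} dμ(x) for all i = 0, …, n; (ii) L(p) ≥ 0 for every p ∈ V with p ≥ 0 on [a,b]. -/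
/-!
Identify a functional with its moment vector `(L (x ^ α i))ᵢ`. Moment vectors of measures on
`[a,b]` include the conic hull of the compact curve `x ↦ (x ^ α i)ᵢ`, and this hull is closed
because the coordinate `x ^ α 0` is bounded away from `0` on `[a,b]`. If `L` is nonnegative on
nonnegative elements of the span, no hyperplane separates its moment vector from that closed cone,
so the moment vector is a conic combination of finitely many curve points, i.e. the moment vector
of a finite atomic measure.
-/

open MeasureTheory Filter Topology
open scoped NNReal ENNReal Pointwise

section ConvexCone

variable {E : Type*}

theorem PointedCone.coe_hull_eq_Ici_smul_convexHull [AddCommGroup E] [Module ℝ E] {K : Set E}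
    (hK : K.Nonempty) :
    (PointedCone.hull ℝ K : Set E) = Set.Ici (0 : ℝ) • convexHull ℝ K := by
  refine subset_antisymm (fun v hv => ?_) ?_
  · induction hv using Submodule.span_induction with
    | mem k hk => exact ⟨1, Set.mem_Ici.2 zero_le_one, k, subset_convexHull ℝ K hk, one_smul ℝ k⟩
    | zero =>
      obtain ⟨k, hk⟩ := hK
      exact ⟨0, Set.mem_Ici.2 le_rfl, k, subset_convexHull ℝ K hk, zero_smul ℝ k⟩
    | add _ _ _ _ hp hq =>
      obtain ⟨s, hs : 0 ≤ s, p, hp, rfl⟩ := hp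
      obtain ⟨t, ht : 0 ≤ t, q, hq, rfl⟩ := hq
      rcases (add_nonneg hs ht).eq_or_lt with hst | hst
      · obtain ⟨rfl, rfl⟩ : s = 0 ∧ t = 0 := (add_eq_zero_iff_of_nonneg hs ht).1 hst.symm
        exact ⟨0, Set.mem_Ici.2 le_rfl, p, hp, by simp⟩
      · refine ⟨s + t, hst.le, _, convex_iff_div.1 (convex_convexHull ℝ K) hp hq hs ht hst, ?_⟩
        dsimp only
        rw [smul_add, smul_smul, smul_smul, mul_div_cancel₀ _ hst.ne', mul_div_cancel₀ _ hst.ne']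
    | smul r _ _ hv =>
      obtain ⟨t, ht : 0 ≤ t, q, hq, rfl⟩ := hv
      exact ⟨r * t, mul_nonneg r.2 ht, q, hq, smul_assoc r t q⟩
  · rintro _ ⟨t, ht, q, hq, rfl⟩
    exact (PointedCone.hull ℝ K).smul_mem ht
      (convexHull_min PointedCone.subset_hull (PointedCone.convex _) hq)

variable [NormedAddCommGroup E] [NormedSpace ℝ E]

theorem IsCompact.convexHull [FiniteDimensional ℝ E] {K : Set E} (hK : IsCompact K) :
    IsCompact (_root_.convexHull ℝ K) := by
  let combo (k : ℕ) (p : (Fin k → ℝ) × (Fin k → E)) : E := ∑ j, p.1 j • p.2 j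
  have hK_eq : _root_.convexHull ℝ K = ⋃ k ∈ Finset.range (Module.finrank ℝ E + 2),
      combo k '' (stdSimplex ℝ (Fin k) ×ˢ Set.univ.pi fun _ => K) := by
    refine subset_antisymm (fun x hx => ?_) ?_
    · obtain ⟨ι, _, z, w, hzK, hz, hw, hw1, rfl⟩ := eq_pos_convex_span_of_mem_convexHull hx
      have hcard : Fintype.card ι < Module.finrank ℝ E + 2 :=
        Nat.lt_succ_of_le (hz.card_le_finrank_succ.trans (by grw [Submodule.finrank_le]))
      let e := (Fintype.equivFin ι).symm
      refine Set.mem_biUnion (Finset.mem_range.2 hcard)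
        ⟨(w ∘ e, z ∘ e), ⟨⟨fun j => (hw _).le, ?_⟩, fun j _ => hzK ⟨_, rfl⟩⟩, ?_⟩
      · simpa only [Function.comp_apply] using (e.sum_comp w).trans hw1
      · exact e.sum_comp fun i => w i • z i
    · simp only [Set.iUnion_subset_iff, Set.image_subset_iff]
      rintro k - ⟨w, z⟩ ⟨⟨hw0, hw1⟩, hz⟩
      exact (convex_convexHull ℝ K).sum_mem (fun j _ => hw0 j) hw1
        fun j _ => subset_convexHull ℝ K (hz j (Set.mem_univ j))
  rw [hK_eq]
  exact (Finset.range _).isCompact_biUnion fun k _ =>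
    ((isCompact_stdSimplex ℝ (Fin k)).prod (isCompact_univ_pi fun _ => hK)).image (by fun_prop)

theorem isClosed_Ici_smul_of_isCompact {D : Set E} (hD : IsCompact D) {φ : E →L[ℝ] ℝ}
    (hφ : ∀ q ∈ D, 0 < φ q) : IsClosed (Set.Ici (0 : ℝ) • D) := by
  refine isClosed_of_closure_subset fun v hv => ?_
  obtain ⟨u, hu, hu_lim⟩ := mem_closure_iff_seq_limit.1 hv
  choose t ht q hq htq using hu
  obtain ⟨q₀, hq₀, σ, hσ, hqσ⟩ := hD.tendsto_subseq hq
  have huσ : Tendsto (u ∘ σ) atTop (𝓝 v) := hu_lim.comp hσ.tendsto_atTop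
  -- the scalar is recovered from the vector by the functional, so it converges too
  have ht_eq : ∀ k, t k = φ (u k) / φ (q k) := fun k => by
    rw [← htq k, map_smul, smul_eq_mul, mul_div_cancel_right₀ _ (hφ _ (hq k)).ne']
  have htσ : Tendsto (t ∘ σ) atTop (𝓝 (φ v / φ q₀)) := by
    simp only [Function.comp_def, ht_eq]
    exact ((φ.continuous.tendsto v).comp huσ).div ((φ.continuous.tendsto q₀).comp hqσ)
      (hφ q₀ hq₀).ne'
  have hv_eq : (φ v / φ q₀) • q₀ = v := by
    refine tendsto_nhds_unique (htσ.smul hqσ) ?_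
    simpa only [Function.comp_def, htq] using huσ
  exact ⟨_, ge_of_tendsto' htσ fun k => ht (σ k), q₀, hq₀, hv_eq⟩

theorem PointedCone.isClosed_hull_of_isCompact [FiniteDimensional ℝ E] {K : Set E}
    (hK : IsCompact K) {φ : E →L[ℝ] ℝ} (hφ : ∀ k ∈ K, 0 < φ k) :
    IsClosed (PointedCone.hull ℝ K : Set E) := by
  rcases K.eq_empty_or_nonempty with rfl | hK_ne
  · simp
  rw [coe_hull_eq_Ici_smul_convexHull hK_ne]
  exact isClosed_Ici_smul_of_isCompact hK.convexHull fun q hq =>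
    convexHull_min hφ (convex_halfSpace_gt φ.toLinearMap.isLinear 0) hq

end ConvexCone

theorem map_pi_eq_sum_mul_single {ι R F : Type*} [Fintype ι] [DecidableEq ι] [CommSemiring R]
    [FunLike F (ι → R) R] [LinearMapClass F R (ι → R) R] (L : F) (c : ι → R) :
    L c = ∑ i, c i * L (Pi.single i 1) := by
  conv_lhs => rw [← Finset.univ_sum_single c, map_sum]
  refine Finset.sum_congr rfl fun i _ => ?_
  rw [← smul_eq_mul, ← map_smul, ← Pi.single_smul', smul_eq_mul, mul_one]

theorem exists_measure_integral_eq_finsupp_sum {X : Type*} [MeasurableSpace X]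
    [MeasurableSingletonClass X] (l : X →₀ ℝ≥0) :
    ∃ μ : Measure X, μ (l.support : Set X)ᶜ = 0 ∧
      ∀ g : X → ℝ, Integrable g μ ∧ ∫ x, g x ∂μ = l.sum fun x r => r * g x := by
  have hdirac (g : X → ℝ) (x : X) : Integrable g ((l x : ℝ≥0∞) • Measure.dirac x) :=
    (integrable_dirac (by simp)).smul_measure (by simp)
  refine ⟨∑ x ∈ l.support, (l x : ℝ≥0∞) • Measure.dirac x, ?_, fun g => ⟨?_, ?_⟩⟩
  · simp [Measure.dirac_apply, em]
  · exact integrable_finsetSum_measure.2 fun x _ => hdirac g x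
  · rw [integral_finsetSum_measure fun x _ => hdirac g x]
    simp [Finsupp.sum, integral_dirac, NNReal.smul_def]

section MomentProblem

variable {X ι : Type*} [DecidableEq ι] {S : Set X} {u : ι → X → ℝ} {L : (ι → ℝ) →ₗ[ℝ] ℝ}

theorem apply_single_mem_hull_of_nonneg [TopologicalSpace X] [Fintype ι] (hS : IsCompact S)
    (hu : ∀ i, ContinuousOn (u i) S) {i₀ : ι} (hi₀ : ∀ x ∈ S, 0 < u i₀ x)
    (hL : ∀ c, (∀ x ∈ S, 0 ≤ ∑ i, c i * u i x) → 0 ≤ L c) :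
    (fun i => L (Pi.single i 1)) ∈ PointedCone.hull ℝ ((fun x i => u i x) '' S) := by
  set K := (fun x i => u i x) '' S
  have hK : IsCompact K := hS.image_of_continuousOn (continuousOn_pi.2 hu)
  have hK_pos : ∀ k ∈ K, 0 < ContinuousLinearMap.proj (R := ℝ) i₀ k := by
    rintro _ ⟨x, hx, rfl⟩
    exact hi₀ x hx
  let C : ProperCone ℝ (ι → ℝ) :=
    ⟨PointedCone.hull ℝ K, PointedCone.isClosed_hull_of_isCompact hK hK_pos⟩
  by_contra hv
  obtain ⟨f, hfC, hfv⟩ := C.hyperplane_separation_point (x₀ := fun i => L (Pi.single i 1)) hv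
  have hLf : L (fun i => f (Pi.single i 1)) = f fun i => L (Pi.single i 1) := by
    rw [map_pi_eq_sum_mul_single L, map_pi_eq_sum_mul_single f]
    simp only [mul_comm]
  refine hfv.not_ge (hLf ▸ hL _ fun x hx => ?_)
  have := hfC _ (PointedCone.subset_hull (Set.mem_image_of_mem _ hx))
  rw [map_pi_eq_sum_mul_single f] at this
  simpa only [mul_comm] using this

variable [MeasurableSpace X]

/-- `L` acts on coefficient vectors, `Pi.single i 1` standing for the function `u i`. -/
def IsMomentFunctional (S : Set X) (u : ι → X → ℝ) (L : (ι → ℝ) →ₗ[ℝ] ℝ) : Prop :=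
  ∃ μ : Measure X, μ Sᶜ = 0 ∧
    ∀ i, IntegrableOn (u i) S μ ∧ L (Pi.single i 1) = ∫ x in S, u i x ∂μ

theorem IsMomentFunctional.nonneg [Fintype ι] (hS : MeasurableSet S)
    (hL : IsMomentFunctional S u L) {c : ι → ℝ} (hc : ∀ x ∈ S, 0 ≤ ∑ i, c i * u i x) :
    0 ≤ L c := by
  obtain ⟨μ, -, hμ⟩ := hL
  have hLc : L c = ∫ x in S, ∑ i, c i * u i x ∂μ := by
    rw [map_pi_eq_sum_mul_single L, integral_finsetSum _ fun i _ => (hμ i).1.const_mul (c i)]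
    exact Finset.sum_congr rfl fun i _ => by rw [(hμ i).2, integral_const_mul]
  exact hLc ▸ setIntegral_nonneg hS hc

theorem isMomentFunctional_of_apply_single_mem_hull [MeasurableSingletonClass X]
    (hL : (fun i => L (Pi.single i 1)) ∈ PointedCone.hull ℝ ((fun x i => u i x) '' S)) :
    IsMomentFunctional S u L := by
  obtain ⟨l, hlS, hl⟩ :=
    (Finsupp.mem_span_image_iff_linearCombination {c : ℝ // 0 ≤ c}).1 hL
  obtain ⟨μ, hμ, hμg⟩ := exists_measure_integral_eq_finsupp_sum l
  have hμS : μ Sᶜ = 0 := measure_mono_null (Set.compl_subset_compl.2 hlS) hμ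
  have hμ_restrict : μ.restrict S = μ := Measure.restrict_eq_self_of_ae_mem (mem_ae_iff.2 hμS)
  refine ⟨μ, hμS, fun i => ⟨by rw [IntegrableOn, hμ_restrict]; exact (hμg _).1, ?_⟩⟩
  rw [hμ_restrict, (hμg _).2, ← congrFun hl i, Finsupp.linearCombination_apply, Finsupp.sum,
    Finset.sum_apply]
  rfl

theorem isMomentFunctional_iff [TopologicalSpace X] [Fintype ι] [MeasurableSingletonClass X]
    (hS : IsCompact S) (hS_meas : MeasurableSet S) (hu : ∀ i, ContinuousOn (u i) S) {i₀ : ι}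
    (hi₀ : ∀ x ∈ S, 0 < u i₀ x) :
    IsMomentFunctional S u L ↔ ∀ c, (∀ x ∈ S, 0 ≤ ∑ i, c i * u i x) → 0 ≤ L c :=
  ⟨fun hL _ => hL.nonneg hS_meas, fun hL =>
    isMomentFunctional_of_apply_single_mem_hull (apply_single_mem_hull_of_nonneg hS hu hi₀ hL)⟩

end MomentProblem

theorem sparse_truncated_hausdorff_moment_problem_general (n : ℕ)
    (α : Fin (n + 1) → ℝ)
    (a b : ℝ) (ha : 0 ≤ a)
    (h0 : a = 0 → α 0 = 0 ∧ ∀ i, 0 ≤ α i)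
    (L : (Fin (n + 1) → ℝ) →ₗ[ℝ] ℝ) :
    (∃ μ : Measure ℝ, μ (Set.Icc a b)ᶜ = 0 ∧
      ∀ i : Fin (n + 1),
        IntegrableOn (fun x : ℝ => x ^ (α i)) (Set.Icc a b) μ ∧
        L (Pi.single i 1) = ∫ x in Set.Icc a b, x ^ (α i) ∂μ) ↔
    (∀ c : Fin (n + 1) → ℝ,
      (∀ x ∈ Set.Icc a b, 0 ≤ ∑ i, c i * x ^ (α i)) → 0 ≤ L c) := by
  have hcont (i : Fin (n + 1)) : ContinuousOn (fun x : ℝ => x ^ α i) (Set.Icc a b) := by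
    refine fun x hx => (Real.continuousAt_rpow_const x (α i) ?_).continuousWithinAt
    rcases ha.eq_or_lt with rfl | ha
    · exact Or.inr ((h0 rfl).2 i)
    · exact Or.inl (ha.trans_le hx.1).ne'
  have hpos (x : ℝ) (hx : x ∈ Set.Icc a b) : 0 < x ^ α 0 := by
    rcases ha.eq_or_lt with rfl | ha
    · simp [(h0 rfl).1]
    · exact Real.rpow_pos_of_pos (ha.trans_le hx.1) _
  exact isMomentFunctional_iff (L := L) isCompact_Icc measurableSet_Icc hcont hpos

/-- sparse truncated Hausdorff moment problem on `[a,b]`: for real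
exponents `α 0 < … < α n` and `0 ≤ a < b` (with `α 0 = 0` and all `α i ≥ 0` when
`a = 0`), a linear functional `L` on the span of the power functions
`x ^ (α 0), …, x ^ (α n)` on `[a,b]` (recorded through coefficient vectors) is a
truncated `[a,b]`-moment functional iff it is non-negative on every element of the
span that is non-negative on `[a,b]`. -/
theorem sparse_truncated_hausdorff_moment_problem (n : ℕ) (hn : 1 ≤ n)
    (α : Fin (n + 1) → ℝ) (hα : StrictMono α)
    (a b : ℝ) (ha : 0 ≤ a) (hab : a < b)
    (h0 : a = 0 → α 0 = 0 ∧ ∀ i, 0 ≤ α i)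
    (L : (Fin (n + 1) → ℝ) →ₗ[ℝ] ℝ) :
    (∃ μ : Measure ℝ, μ (Set.Icc a b)ᶜ = 0 ∧
      ∀ i : Fin (n + 1),
        IntegrableOn (fun x : ℝ => x ^ (α i)) (Set.Icc a b) μ ∧
        L (Pi.single i 1) = ∫ x in Set.Icc a b, x ^ (α i) ∂μ) ↔
    (∀ c : Fin (n + 1) → ℝ,
      (∀ x ∈ Set.Icc a b, 0 ≤ ∑ i, c i * x ^ (α i)) → 0 ≤ L c) :=
  sparse_truncated_hausdorff_moment_problem_general n α a b ha h0 L
end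

section
/- Let n ≥ 1, let (X, 𝔄) be a measurable space, let f_1, …, f_n : X → ℝ be measurable functions, and let μ be a measure on (X, 𝔄) such that each f_i is μ-integrable, with s_i := ∫_X f_i dμ for i = 1, …, n. Then there exist a natural number K with K ≤ n, pairwise distinct points x_1, …, x_K ∈ X, and positive real numbers c_1, …, c_K such that s_i = Σ_{j=1}^K c_j · f_i(x_j) for all i = 1, …, n. -/
/-!
Put `F = (f₁, …, fₙ) : X → ℝⁿ` and `s = ∫ F dμ`. First, `s` lies in the convex cone `C` generated
by `F(X)`. Otherwise, separating `s` from the relative interior of `C` gives a functional `φ` that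
is nonnegative on `C`, does not vanish on `C`, and has `φ s ≤ 0`. Then `φ ∘ F ≥ 0` has integral
`φ s ≤ 0`, so it vanishes almost everywhere. Replacing `F` by `0` off `{φ ∘ F = 0}` leaves the
integral unchanged and lowers the dimension of the span of the range, so we conclude by induction
on that dimension. Carathéodory's theorem for cones then writes `s` as a positive combination of
linearly independent vectors `F(xⱼ)`. There are at most `n` of them, and the points `xⱼ` are
distinct.
-/

open MeasureTheory Set Finset Submodule PointedCone

section Caratheodory

variable {ι E : Type*} [AddCommGroup E] [Module ℝ E] {w : ι → E}

theorem exists_coeff_eq_zero_of_not_linearIndepOn {t : Finset ι} {c : ι → ℝ}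
    (hc : ∀ i ∈ t, 0 ≤ c i) (ht : ¬LinearIndepOn ℝ w t) :
    ∃ i ∈ t, ∃ c' : ι → ℝ, (∀ j ∈ t, 0 ≤ c' j) ∧ c' i = 0 ∧
      ∑ j ∈ t, c' j • w j = ∑ j ∈ t, c j • w j := by
  obtain ⟨g, hg, hpos⟩ : ∃ g : ι → ℝ, ∑ j ∈ t, g j • w j = 0 ∧ ∃ j ∈ t, 0 < g j := by
    obtain ⟨g, hg, i, hi, hgi⟩ := not_linearIndepOn_finset_iff.mp ht
    rcases hgi.lt_or_gt with hneg | hpos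
    · exact ⟨-g, by simp [neg_smul, hg], i, hi, by simpa⟩
    · exact ⟨g, hg, i, hi, hpos⟩
  -- Subtract the largest multiple of the relation `g` that keeps all coefficients nonnegative.
  obtain ⟨i, hi, hmin⟩ := {j ∈ t | 0 < g j}.exists_min_image (fun j => c j / g j)
    (by simpa [Finset.Nonempty] using hpos)
  rw [mem_filter] at hi
  refine ⟨i, hi.1, fun j => c j - c i / g i * g j, fun j hj => ?_,
    by simp [hi.2.ne'], ?_⟩
  · rw [sub_nonneg]
    rcases lt_or_ge 0 (g j) with hgj | hgj
    · exact (le_div_iff₀ hgj).mp (hmin j (mem_filter.mpr ⟨hj, hgj⟩))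
    · exact (mul_nonpos_of_nonneg_of_nonpos (div_nonneg (hc i hi.1) hi.2.le) hgj).trans
        (hc j hj)
  · simp only [sub_smul, mul_smul, sum_sub_distrib, ← smul_sum, hg, smul_zero, sub_zero]

theorem exists_linearIndepOn_pos_sum_eq (t : Finset ι) (c : ι → ℝ) (hc : ∀ i ∈ t, 0 ≤ c i) :
    ∃ (u : Finset ι) (b : ι → ℝ), LinearIndepOn ℝ w u ∧ (∀ i ∈ u, 0 < b i) ∧
      ∑ i ∈ u, b i • w i = ∑ i ∈ t, c i • w i := by
  classical
  induction t using Finset.strongInduction generalizing c with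
  | H t ih =>
  by_cases h : LinearIndepOn ℝ w t ∧ ∀ i ∈ t, 0 < c i
  · exact ⟨t, c, h.1, h.2, rfl⟩
  obtain ⟨i, hi, c', hc', hc'i, hsum⟩ : ∃ i ∈ t, ∃ c' : ι → ℝ, (∀ j ∈ t, 0 ≤ c' j) ∧ c' i = 0 ∧
      ∑ j ∈ t, c' j • w j = ∑ j ∈ t, c j • w j := by
    rcases not_and_or.mp h with hli | hpos
    · exact exists_coeff_eq_zero_of_not_linearIndepOn hc hli
    · push Not at hpos
      obtain ⟨i, hi, hci⟩ := hpos
      exact ⟨i, hi, c, hc, le_antisymm hci (hc i hi), rfl⟩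
  obtain ⟨u, b, hu, hb, hsum'⟩ :=
    ih (t.erase i) (erase_ssubset hi) c' fun j hj => hc' j (mem_of_mem_erase hj)
  exact ⟨u, b, hu, hb, by rw [hsum', sum_erase _ (by simp [hc'i]), hsum]⟩

theorem PointedCone.exists_linearIndependent_of_mem_hull {v : E}
    (hv : v ∈ hull ℝ (range w)) :
    ∃ (K : ℕ) (x : Fin K → ι) (c : Fin K → ℝ),
      LinearIndependent ℝ (w ∘ x) ∧ (∀ j, 0 < c j) ∧ v = ∑ j, c j • w (x j) := by
  obtain ⟨a, rfl⟩ := Finsupp.mem_span_range_iff_exists_finsupp.mp hv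
  obtain ⟨u, b, hu, hb, hsum⟩ :=
    exists_linearIndepOn_pos_sum_eq (w := w) a.support (fun i => a i) fun i _ => (a i).2
  let e := u.equivFin.symm
  refine ⟨u.card, fun j => e j, fun j => b (e j), hu.comp e e.injective, fun j => hb _ (e j).2, ?_⟩
  rw [Equiv.sum_comp e (fun y : u => b y • w y), sum_coe_sort u (fun y => b y • w y), hsum]
  simp [Finsupp.sum]

end Caratheodory

theorem PointedCone.apply_nonneg_of_forall_le {E : Type*} [AddCommGroup E] [Module ℝ E]
    {C : PointedCone ℝ E} {φ : E →ₗ[ℝ] ℝ} {m : ℝ} (h : ∀ c ∈ C, m ≤ φ c) {c : E}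
    (hc : c ∈ C) : 0 ≤ φ c := by
  by_contra! hneg
  have hscale := h (((|m| + 1) / -φ c) • c)
    (C.smul_mem (div_nonneg (by positivity) (neg_nonneg.mpr hneg.le)) hc)
  rw [map_smul, smul_eq_mul, div_mul_eq_mul_div, div_neg, mul_div_cancel_right₀ _ hneg.ne] at hscale
  linarith [neg_abs_le m]

section Separation

variable {E : Type*} [NormedAddCommGroup E] [NormedSpace ℝ E] [FiniteDimensional ℝ E]

theorem PointedCone.exists_dual_nonneg_of_notMem_of_span_eq_top {C : PointedCone ℝ E}
    (hC : span ℝ (C : Set E) = ⊤) {s : E} (hs : s ∉ C) :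
    ∃ φ : E →ₗ[ℝ] ℝ, (∀ c ∈ C, 0 ≤ φ c) ∧ φ s ≤ 0 ∧ ∃ c ∈ C, φ c ≠ 0 := by
  have hint : (interior (C : Set E)).Nonempty := by
    rw [C.convex.interior_nonempty_iff_affineSpan_eq_top,
      AffineSubspace.affineSpan_eq_top_iff_vectorSpan_eq_top_of_nonempty ℝ E E ⟨0, C.zero_mem⟩,
      vectorSpan_eq_span_vsub_set_right ℝ C.zero_mem]
    simpa using hC
  obtain ⟨f, hf0, hf⟩ := geometric_hahn_banach_of_nonempty_interior_point C.convex
    (fun h => hs (interior_subset h)) hint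
  have hle : ∀ c ∈ C, -f s ≤ -f c := fun c hc => neg_le_neg (hf c hc)
  refine ⟨(-f : StrongDual ℝ E), fun c hc => apply_nonneg_of_forall_le hle hc,
    by simpa using hle 0 C.zero_mem, ?_⟩
  by_contra! h
  exact hf0 (neg_eq_zero.mp (ContinuousLinearMap.coe_injective (LinearMap.ext_on hC h)))

theorem PointedCone.exists_dual_nonneg_of_notMem {C : PointedCone ℝ E} {s : E}
    (hs : s ∈ span ℝ (C : Set E)) (hsC : s ∉ C) :
    ∃ φ : E →ₗ[ℝ] ℝ, (∀ c ∈ C, 0 ≤ φ c) ∧ φ s ≤ 0 ∧ ∃ c ∈ C, φ c ≠ 0 := by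
  set W := span ℝ (C : Set E)
  obtain ⟨ψ, hψC, hψs, ⟨c, hc⟩, hcC, hψc⟩ :=
    exists_dual_nonneg_of_notMem_of_span_eq_top (C := C.comap W.subtype) span_span_coe_preimage
      (s := ⟨s, hs⟩) hsC
  obtain ⟨φ, hφ⟩ := LinearMap.exists_extend ψ
  have hφψ (v : W) : φ v = ψ v := LinearMap.congr_fun hφ v
  refine ⟨φ, fun c hc => ?_, (hφψ ⟨s, hs⟩).trans_le hψs, c, hcC, (hφψ ⟨c, hc⟩).trans_ne hψc⟩
  exact (hφψ ⟨c, Submodule.subset_span hc⟩).trans_ge (hψC _ hc)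

end Separation

section Integral

variable {X E : Type*} [MeasurableSpace X] {μ : Measure X}
  [NormedAddCommGroup E] [NormedSpace ℝ E] [FiniteDimensional ℝ E]

theorem integral_mem_submodule (p : Submodule ℝ E) {F : X → E} (hF : ∀ x, F x ∈ p) :
    ∫ x, F x ∂μ ∈ p := by
  by_cases hFi : Integrable F μ
  swap
  · simp [integral_undef hFi]
  by_contra hs
  obtain ⟨φ, hφs, hpφ⟩ := p.exists_le_ker_of_notMem hs
  apply hφs
  rw [← LinearMap.coe_toContinuousLinearMap' φ, ← φ.toContinuousLinearMap.integral_comp_comm hFi]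
  simp [fun x => LinearMap.mem_ker.mp (hpφ (hF x))]

theorem integral_mem_hull_range {F : X → E} (hF : Integrable F μ) :
    ∫ x, F x ∂μ ∈ hull ℝ (range F) := by
  induction hd : Module.finrank ℝ (span ℝ (range F)) using Nat.strong_induction_on
    generalizing F with
  | _ d ih =>
  by_contra hs
  obtain ⟨φ, hφC, hφs, c, hc, hφc⟩ := exists_dual_nonneg_of_notMem
    (span_mono subset_hull (integral_mem_submodule _ fun x => subset_span (mem_range_self x))) hs
  have hφF (x : X) : 0 ≤ φ (F x) := hφC _ (subset_hull (mem_range_self x))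
  have hφFi : Integrable (fun x => φ (F x)) μ := φ.toContinuousLinearMap.integrable_comp hF
  have hφF0 : ∀ᵐ x ∂μ, φ (F x) = 0 := by
    refine (integral_eq_zero_iff_of_nonneg hφF hφFi).mp (le_antisymm ?_ (integral_nonneg hφF))
    rwa [← LinearMap.coe_toContinuousLinearMap' φ, φ.toContinuousLinearMap.integral_comp_comm hF]
  set N := {x | φ (F x) = 0}
  set F' := N.indicator F
  have hF' : F' =ᵐ[μ] F := by
    filter_upwards [hφF0] with x (hx : x ∈ N) using indicator_of_mem hx F
  have hF'mem (x : X) : F' x = 0 ∨ (F' x = F x ∧ φ (F x) = 0) := by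
    by_cases hx : x ∈ N
    · exact .inr ⟨indicator_of_mem hx F, hx⟩
    · exact .inl (indicator_of_notMem hx F)
  have hspan : span ℝ (range F') < span ℝ (range F) := by
    refine lt_of_le_of_lt (b := span ℝ (range F) ⊓ LinearMap.ker φ) ?_
      (inf_lt_left.mpr fun h => hφc (h (hull_le_span ℝ _ hc)))
    refine span_le.mpr (range_subset_iff.mpr fun x => ?_)
    rcases hF'mem x with h0 | ⟨hF'x, hx⟩
    · simp [h0]
    · exact hF'x ▸ ⟨subset_span (mem_range_self x), hx⟩
  have hhull : hull ℝ (range F') ≤ hull ℝ (range F) := by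
    refine span_le.mpr (range_subset_iff.mpr fun x => ?_)
    rcases hF'mem x with h0 | ⟨hF'x, -⟩
    · simp [h0]
    · exact hF'x ▸ subset_hull (mem_range_self x)
  refine hs (integral_congr_ae hF' ▸ hhull ?_)
  exact ih _ (hd ▸ finrank_lt_finrank_of_lt hspan) (hF.congr hF'.symm) rfl

end Integral

theorem richter_theorem_general {X : Type*} [MeasurableSpace X] (n : ℕ)
    (f : Fin n → X → ℝ)
    (μ : Measure X) (hint : ∀ i, Integrable (f i) μ) :
    ∃ (K : ℕ) (_ : K ≤ n) (x : Fin K → X) (c : Fin K → ℝ),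
      Function.Injective x ∧ (∀ j, 0 < c j) ∧
      ∀ i, ∫ t, f i t ∂μ = ∑ j, c j * f i (x j) := by
  obtain ⟨K, x, c, hli, hc, hsum⟩ :=
    exists_linearIndependent_of_mem_hull (integral_mem_hull_range (integrable_pi_iff.mpr hint))
  refine ⟨K, by simpa using hli.fintype_card_le_finrank, x, c, hli.injective.of_comp, hc,
    fun i => ?_⟩
  rw [← eval_integral hint i]
  simpa using congr_fun hsum i

/-- Richter's theorem: given finitely many `μ`-integrable measurable
functions `f 1, …, f n` on a measurable space `X`, there exist `K ≤ n`, pairwise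
distinct points `x 1, …, x K ∈ X`, and positive weights `c 1, …, c K` such that
`∫ f i dμ = ∑ j, c j * f i (x j)` for all `i`. -/
theorem richter_theorem {X : Type*} [MeasurableSpace X] (n : ℕ) (hn : 1 ≤ n)
    (f : Fin n → X → ℝ) (hf : ∀ i, Measurable (f i))
    (μ : Measure X) (hint : ∀ i, Integrable (f i) μ) :
    ∃ (K : ℕ) (_ : K ≤ n) (x : Fin K → X) (c : Fin K → ℝ),
      Function.Injective x ∧ (∀ j, 0 < c j) ∧
      ∀ i, ∫ t, f i t ∂μ = ∑ j, c j * f i (x j) :=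
  richter_theorem_general n f μ hint
end

section
/- Let (s_i)_{i∈ℕ₀} be an arbitrary real sequence. Then there exist (positive Borel) measures μ⁺ and μ⁻ on [0,∞) such that for every i ∈ ℕ₀ the function x ↦ x^i is integrable with respect to both μ⁺ and μ⁻ and s_i = ∫_{[0,∞)} x^i dμ⁺(x) − ∫_{[0,∞)} x^i dμ⁻(x). In particular, every real sequence is the moment sequence of a signed measure on [0,∞) (and hence also of a signed measure on ℝ). -/
/-!
For every `n` and `t` there are finitely many atoms in `(0, ∞)` whose signed moments of order
`< n` vanish and whose `n`-th moment is `t`: solve a Vandermonde system for atoms at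
`1, …, n + 1` and push them out by a large factor `R`, which multiplies the `i`-th moment by
`R ^ (i - n)` and so makes every absolute moment of order `< n` smaller than `2⁻ⁿ`. Choosing the
parameter `t` of stage `n` recursively so that it corrects the `n`-th moment of the earlier
stages, the union of all atoms has `n`-th moment `s n`, and the bound `2⁻ⁿ` makes every moment
series absolutely convergent. The positive and negative parts of this signed atomic measure are
`μ⁺` and `μ⁻`.
-/

open MeasureTheory Finset

section SumDirac

variable {ι X : Type*} [Countable ι] [MeasurableSpace X]

/-- `∑ j, c j • δ (p j)`, with every negative mass `c j` replaced by `0`. -/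
noncomputable def sumDirac (c : ι → ℝ) (p : ι → X) : Measure X :=
  Measure.sum fun j => ENNReal.ofReal (c j) • Measure.dirac (p j)

lemma ae_mem_sumDirac {s : Set X} (hs : MeasurableSet s) (c : ι → ℝ) {p : ι → X}
    (hp : ∀ j, p j ∈ s) : ∀ᵐ x ∂sumDirac c p, x ∈ s := by
  rw [sumDirac, Measure.ae_sum_iff]
  exact fun j => Measure.ae_smul_measure ((ae_dirac_iff hs).2 (hp j)) _

variable [MeasurableSingletonClass X]

lemma integrable_sumDirac {c : ι → ℝ} {p : ι → X} {f : X → ℝ}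
    (h : Summable fun j => |c j| * |f (p j)|) : Integrable f (sumDirac c p) := by
  refine integrable_sum_dirac (fun _ => ENNReal.ofReal_ne_top) (h.of_nonneg_of_le
    (fun j => by positivity) fun j => ?_)
  rw [ENNReal.toReal_ofReal', Real.norm_eq_abs]
  gcongr
  exact max_le (le_abs_self _) (abs_nonneg _)

lemma integral_sumDirac (c : ι → ℝ) (p : ι → X) (f : X → ℝ) :
    ∫ x, f x ∂sumDirac c p = ∑' j, max (c j) 0 * f (p j) := by
  simp only [sumDirac, integral_sum_dirac (fun _ => ENNReal.ofReal_ne_top),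
    ENNReal.toReal_ofReal', smul_eq_mul]

lemma integral_sumDirac_sub_integral_sumDirac_neg {c : ι → ℝ} {p : ι → X} {f : X → ℝ}
    (h : Summable fun j => |c j| * |f (p j)|) :
    (∫ x, f x ∂sumDirac c p) - ∫ x, f x ∂sumDirac (-c) p = ∑' j, c j * f (p j) := by
  have summable_clip (b : ι → ℝ) (hb : ∀ j, |b j| = |c j|) :
      Summable fun j => max (b j) 0 * f (p j) :=
    .of_norm_bounded h fun j => by
      rw [norm_mul, Real.norm_eq_abs, Real.norm_eq_abs, abs_of_nonneg (le_max_right _ _), ← hb]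
      gcongr
      exact max_le (le_abs_self _) (abs_nonneg _)
  rw [integral_sumDirac, integral_sumDirac,
    ← (summable_clip c fun _ => rfl).tsum_sub (summable_clip (-c) fun _ => abs_neg _)]
  simp only [Pi.neg_apply, ← sub_mul, max_zero_sub_max_neg_zero_eq_self]

end SumDirac

lemma exists_sum_mul_pow_eq {K : Type*} [Field K] {n : ℕ} {v : Fin n → K}
    (hv : Function.Injective v) (y : Fin n → K) :
    ∃ w : Fin n → K, ∀ j : Fin n, ∑ k, w k * v k ^ (j : ℕ) = y j := by
  have hunit : IsUnit (Matrix.vandermonde v) :=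
    (Matrix.isUnit_iff_isUnit_det _).2 (Matrix.det_vandermonde_ne_zero_iff.2 hv).isUnit
  obtain ⟨w, hw⟩ := Matrix.vecMul_surjective_iff_isUnit.2 hunit y
  exact ⟨w, fun j => by simpa [Matrix.vecMul, dotProduct] using congrFun hw j⟩

lemma sum_mul_mul_pow {ι : Type*} (s : Finset ι) (a R : ℝ) (w q : ι → ℝ) (i : ℕ) :
    ∑ k ∈ s, a * w k * (R * q k) ^ i = a * R ^ i * ∑ k ∈ s, w k * q k ^ i := by
  rw [mul_sum]
  exact sum_congr rfl fun k _ => by ring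

lemma exists_atoms_moments (n : ℕ) (t : ℝ) {ε : ℝ} (hε : 0 < ε) :
    ∃ c p : Fin (n + 1) → ℝ, (∀ k, 0 ≤ p k) ∧
      (∀ i < n, ∑ k, c k * p k ^ i = 0) ∧ ∑ k, c k * p k ^ n = t ∧
      ∀ i < n, ∑ k, |c k| * p k ^ i ≤ ε := by
  obtain ⟨w, hw⟩ := exists_sum_mul_pow_eq (v := fun k : Fin (n + 1) => (k : ℝ) + 1)
    (fun a b h => Fin.ext (by simpa using h)) (Pi.single (Fin.last n) 1)
  have hw_pow (i : ℕ) (hi : i ≤ n) :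
      ∑ k, w k * ((k : ℝ) + 1) ^ i = if i = n then 1 else 0 := by
    simpa [Pi.single_apply, Fin.ext_iff] using hw ⟨i, Nat.lt_succ_of_le hi⟩
  set C := ∑ k, |w k| * ((k : ℝ) + 1) ^ n
  set R := 1 + |t| * C / ε
  have hC : 0 ≤ C := by positivity
  have hR : 1 ≤ R := le_add_of_nonneg_right (by positivity)
  refine ⟨fun k => t / R ^ n * w k, fun k => R * ((k : ℝ) + 1), fun k => by positivity,
    fun i hi => ?_, ?_, fun i hi => ?_⟩
  · rw [sum_mul_mul_pow, hw_pow i hi.le, if_neg hi.ne, mul_zero]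
  · rw [sum_mul_mul_pow, hw_pow n le_rfl, if_pos rfl, mul_one]
    field_simp
  · have hR0 : 0 < R := by linarith
    have habs (k : Fin (n + 1)) : |t / R ^ n * w k| = |t| / R ^ n * |w k| := by
      rw [abs_mul, abs_div, abs_pow, abs_of_pos hR0]
    simp only [habs]
    rw [sum_mul_mul_pow]
    calc |t| / R ^ n * R ^ i * ∑ k, |w k| * ((k : ℝ) + 1) ^ i
        ≤ |t| / R ^ n * R ^ i * C := by
          gcongr
          refine sum_le_sum fun k _ => ?_
          gcongr
          exact le_add_of_nonneg_left (by positivity)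
      _ = |t| * C / R * (R ^ (i + 1) / R ^ n) := by field_simp; ring
      _ ≤ |t| * C / R * 1 := by
          gcongr
          exact div_le_one_of_le₀ (pow_le_pow_right₀ hR hi) (by positivity)
      _ ≤ ε := by
          rw [mul_one, div_le_iff₀ hR0]
          simp only [R]
          field_simp
          linarith

/-- If stage `n` with parameter `t` has moments `m n t i`, this is the parameter of stage `n` for
which the `n`-th moments of stages `0, …, n` add up to `s n`. -/
noncomputable def correction (s : ℕ → ℝ) (m : ℕ → ℝ → ℕ → ℝ) (n : ℕ) : ℝ :=
  s n - ∑ k : Fin n, m k (correction s m k) n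

lemma sum_range_succ_correction (s : ℕ → ℝ) {m : ℕ → ℝ → ℕ → ℝ}
    (hm : ∀ n t, m n t n = t) (i : ℕ) :
    ∑ n ∈ range (i + 1), m n (correction s m n) i = s i := by
  rw [sum_range_succ, hm, correction,
    Fin.sum_univ_eq_sum_range (fun k => m k (correction s m k) i)]
  ring

theorem exists_atoms_tsum_moments (s : ℕ → ℝ) :
    ∃ a p : (Σ n : ℕ, Fin (n + 1)) → ℝ, (∀ j, 0 ≤ p j) ∧
      (∀ i : ℕ, Summable fun j => |a j| * |p j ^ i|) ∧
      ∀ i : ℕ, ∑' j, a j * p j ^ i = s i := by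
  choose c p hp hlow hdiag hsmall using
    fun n t => exists_atoms_moments n t (pow_pos (one_half_pos (α := ℝ)) n)
  set τ := correction s fun n t i => ∑ k, c n t k * p n t k ^ i
  have hstage (i : ℕ) : Summable fun n => ∑ k, |c n (τ n) k| * |p n (τ n) k ^ i| := by
    refine .of_norm_bounded_eventually_nat summable_geometric_two ?_
    filter_upwards [Filter.eventually_gt_atTop i] with n hn
    rw [Real.norm_of_nonneg (by positivity)]
    simpa only [abs_pow, abs_of_nonneg (hp _ _ _)] using hsmall n (τ n) i hn
  have hsum (i : ℕ) : Summable fun j : (Σ n : ℕ, Fin (n + 1)) =>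
      |c j.1 (τ j.1) j.2| * |p j.1 (τ j.1) j.2 ^ i| :=
    (summable_sigma_of_nonneg fun _ => by positivity).2
      ⟨fun _ => .of_finite, by simpa only [tsum_fintype] using hstage i⟩
  refine ⟨fun j => c j.1 (τ j.1) j.2, fun j => p j.1 (τ j.1) j.2, fun j => hp _ _ _, hsum,
    fun i => ?_⟩
  have hsum_signed : Summable fun j : (Σ n : ℕ, Fin (n + 1)) =>
      c j.1 (τ j.1) j.2 * p j.1 (τ j.1) j.2 ^ i :=
    (hsum i).of_norm_bounded fun j => (norm_mul _ _).le
  rw [hsum_signed.tsum_sigma]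
  simp only [tsum_fintype]
  rw [tsum_eq_sum (s := range (i + 1)) fun n hn => hlow n _ i (by simpa using hn),
    sum_range_succ_correction s (m := fun n t i => ∑ k, c n t k * p n t k ^ i) hdiag]

/-- Boas' theorem: every real sequence `(s i)` is the moment sequence
of a signed measure on `[0,∞)`, i.e. there are (positive) measures `μ⁺` and `μ⁻`
on `[0,∞)` with respect to which all monomials `x ^ i` are integrable and such that
`s i = ∫ x ^ i dμ⁺ − ∫ x ^ i dμ⁻` for all `i`. -/
theorem boas_theorem (s : ℕ → ℝ) :
    ∃ μp μn : Measure ℝ,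
      μp (Set.Ici 0)ᶜ = 0 ∧ μn (Set.Ici 0)ᶜ = 0 ∧
      (∀ i : ℕ, IntegrableOn (fun x : ℝ => x ^ i) (Set.Ici 0) μp) ∧
      (∀ i : ℕ, IntegrableOn (fun x : ℝ => x ^ i) (Set.Ici 0) μn) ∧
      ∀ i : ℕ, s i =
        (∫ x in Set.Ici (0 : ℝ), x ^ i ∂μp) - ∫ x in Set.Ici (0 : ℝ), x ^ i ∂μn := by
  obtain ⟨a, p, hp, hsum, hs⟩ := exists_atoms_tsum_moments s
  have hsupp (c : (Σ n : ℕ, Fin (n + 1)) → ℝ) : ∀ᵐ x ∂sumDirac c p, x ∈ Set.Ici 0 :=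
    ae_mem_sumDirac measurableSet_Ici c hp
  have hrestrict (c : (Σ n : ℕ, Fin (n + 1)) → ℝ) :
      (sumDirac c p).restrict (Set.Ici 0) = sumDirac c p :=
    Measure.restrict_eq_self_of_ae_mem (hsupp c)
  refine ⟨sumDirac a p, sumDirac (-a) p, mem_ae_iff.1 (hsupp a), mem_ae_iff.1 (hsupp (-a)),
    fun i => (integrable_sumDirac (hsum i)).integrableOn,
    fun i => (integrable_sumDirac (by simpa using hsum i)).integrableOn, fun i => ?_⟩
  rw [hrestrict, hrestrict,
    integral_sumDirac_sub_integral_sumDirac_neg (f := (· ^ i)) (hsum i), hs]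
end
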